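/- arXiv:2511.21797 — 2 statements merged into one kernel-verified Lean document; each statement's English description precedes it below -/
import Mathlib

section
/- Let T be an n-ary Γ-semiring and I ⊆ T a Γ-ideal. Then the Bourne relation ≡_I is a congruence for the n-ary multiplication: if xⱼ ≡_I xⱼ′ for every j ∈ {1,…,n}, then [x₁,…,xₙ]_{γ⃗} ≡_I [x₁′,…,xₙ′]_{γ⃗} for every γ⃗ ∈ Γ^(n−1). Moreover ≡_I is compatible with addition: x ≡_I x′ and y ≡_I y′ imply x + y ≡_I x′ + y′. -/
/-- An `n`-ary `Γ`-semiring: a commutative additive monoid `T`, a commutative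
additive semigroup `Γ`, and a multiplication `μ : T^n × Γ^(n-1) → T` satisfying
(A1) additivity in each `T`-slot, (A2) additivity in each `Γ`-slot, and
(A4) absorption of zero in any `T`-slot. -/
structure NaryGammaSemiring (n : ℕ) (T : Type*) (Γ : Type*)
    [AddCommMonoid T] [AddCommSemigroup Γ] where
  mul : (Fin n → T) → (Fin (n - 1) → Γ) → T
  add_slot : ∀ (x : Fin n → T) (j : Fin n) (a b : T) (γ : Fin (n - 1) → Γ),
    mul (Function.update x j (a + b)) γ
      = mul (Function.update x j a) γ + mul (Function.update x j b) γ
  add_gamma : ∀ (x : Fin n → T) (k : Fin (n - 1)) (δ δ' : Γ) (γ : Fin (n - 1) → Γ),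
    mul x (Function.update γ k (δ + δ'))
      = mul x (Function.update γ k δ) + mul x (Function.update γ k δ')
  zero_slot : ∀ (x : Fin n → T) (γ : Fin (n - 1) → Γ) (j : Fin n),
    x j = 0 → mul x γ = 0

/-- A `Γ`-ideal of an `n`-ary `Γ`-semiring: an additive submonoid closed under
insertion of any of its elements into any `T`-slot of the multiplication. -/
structure IsGammaIdeal {n : ℕ} {T Γ : Type*} [AddCommMonoid T] [AddCommSemigroup Γ]
    (S : NaryGammaSemiring n T Γ) (I : Set T) : Prop where
  zero_mem : (0 : T) ∈ I
  add_mem : ∀ {a b : T}, a ∈ I → b ∈ I → a + b ∈ I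
  insert_mem : ∀ (x : Fin n → T) (j : Fin n) (y : T), y ∈ I →
    ∀ γ : Fin (n - 1) → Γ, S.mul (Function.update x j y) γ ∈ I

/-- The Bourne relation modulo `I`: `x ≡_I x'` iff `x + a = x' + b` for some `a, b ∈ I`. -/
def Bourne {T : Type*} [AddCommMonoid T] (I : Set T) (x x' : T) : Prop :=
  ∃ a ∈ I, ∃ b ∈ I, x + a = x' + b

/-- the Bourne relation modulo a `Γ`-ideal is a congruence for the
`n`-ary multiplication and is compatible with addition. -/
theorem bourne_congruence {n : ℕ} {T Γ : Type*} [AddCommMonoid T] [AddCommSemigroup Γ]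
    (hn : 2 ≤ n) (S : NaryGammaSemiring n T Γ) (I : Set T) (hI : IsGammaIdeal S I) :
    (∀ (x x' : Fin n → T) (γ : Fin (n - 1) → Γ),
        (∀ j : Fin n, Bourne I (x j) (x' j)) → Bourne I (S.mul x γ) (S.mul x' γ)) ∧
    (∀ x x' y y' : T, Bourne I x x' → Bourne I y y' → Bourne I (x + y) (x' + y')) := by
  have htrans : ∀ {p q r : T}, Bourne I p q → Bourne I q r → Bourne I p r := by
    rintro p q r ⟨a, ha, b, hb, hab⟩ ⟨c, hc, d, hd, hcd⟩
    refine ⟨a + c, hI.add_mem ha hc, b + d, hI.add_mem hb hd, ?_⟩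
    calc p + (a + c) = (p + a) + c := by rw [add_assoc]
      _ = (q + b) + c := by rw [hab]
      _ = (q + c) + b := by rw [add_assoc, add_assoc, add_comm b c]
      _ = (r + d) + b := by rw [hcd]
      _ = r + (b + d) := by rw [add_assoc, add_comm d b]
  have hstep : ∀ (z : Fin n → T) (j : Fin n) (v : T) (γ : Fin (n - 1) → Γ),
      Bourne I (z j) v → Bourne I (S.mul z γ) (S.mul (Function.update z j v) γ) := by
    rintro z j v γ ⟨a, ha, b, hb, hab⟩
    refine ⟨S.mul (Function.update z j a) γ, hI.insert_mem z j a ha γ,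
      S.mul (Function.update z j b) γ, hI.insert_mem z j b hb γ, ?_⟩
    have h1 : S.mul z γ + S.mul (Function.update z j a) γ
        = S.mul (Function.update z j (z j + a)) γ := by
      rw [S.add_slot, Function.update_eq_self]
    have h2 : S.mul (Function.update z j v) γ
          + S.mul (Function.update z j b) γ
        = S.mul (Function.update z j (v + b)) γ := (S.add_slot z j v b γ).symm
    rw [h1, h2, hab]
  constructor
  · intro x x' γ hxx
    have key : ∀ k : ℕ, k ≤ n →
        Bourne I (S.mul x γ) (S.mul (fun i => if i.val < k then x' i else x i) γ) := by
      intro k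
      induction k with
      | zero =>
        intro _
        simp only [Nat.not_lt_zero, if_false]
        exact ⟨0, hI.zero_mem, 0, hI.zero_mem, rfl⟩
      | succ k ih =>
        intro hk
        refine htrans (ih (Nat.le_of_succ_le hk)) ?_
        set j : Fin n := ⟨k, hk⟩
        have heq : (fun i : Fin n => if i.val < k + 1 then x' i else x i)
            = Function.update (fun i : Fin n => if i.val < k then x' i else x i) j (x' j) := by
          funext i
          rcases eq_or_ne i j with rfl | hij
          · rw [Function.update_self]
            exact if_pos (Nat.lt_succ_self k)
          · have hik : i.val ≠ k := fun h => hij (Fin.ext h)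
            rw [Function.update_of_ne hij]
            by_cases h : i.val < k
            · rw [if_pos (Nat.lt_succ_of_lt h), if_pos h]
            · rw [if_neg (by omega), if_neg h]
        rw [heq]
        refine hstep _ j (x' j) γ ?_
        rw [if_neg (lt_irrefl k)]
        exact hxx j
    have hfin := key n le_rfl
    have : (fun i : Fin n => if i.val < n then x' i else x i) = x' := by
      funext i; simp [i.isLt]
    rwa [this] at hfin
  · rintro x x' y y' ⟨a, ha, b, hb, hab⟩ ⟨c, hc, d, hd, hcd⟩
    refine ⟨a + c, hI.add_mem ha hc, b + d, hI.add_mem hb hd, ?_⟩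
    calc x + y + (a + c) = (x + a) + (y + c) := by
          rw [add_assoc, add_assoc, add_comm y (a + c), add_assoc, add_comm c y]
      _ = (x' + b) + (y' + d) := by rw [hab, hcd]
      _ = x' + y' + (b + d) := by
          rw [add_assoc, add_assoc, add_comm b (y' + d), add_assoc, add_comm d b]
end

section
/- Let T be an n-ary Γ-semiring and I ⊆ T a Γ-ideal. On the quotient commutative additive monoid T/≡_I of T by the Bourne relation, the operation [x₁ + I, …, xₙ + I]_{γ⃗} := [x₁,…,xₙ]_{γ⃗} + I is well defined, and with this operation T/≡_I again satisfies axioms (A1), (A2) and (A4); that is, the quotient T/I is an n-ary Γ-semiring and the canonical projection T → T/I is additive and multiplicative. -/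
section Helpers
variable {n : ℕ} {T Γ : Type*} [AddCommMonoid T] [AddCommSemigroup Γ]

lemma bourne_refl {I : Set T} (h0 : (0:T) ∈ I) (x : T) : Bourne I x x :=
  ⟨0, h0, 0, h0, rfl⟩

lemma bourne_symm {I : Set T} {x y : T} (h : Bourne I x y) : Bourne I y x := by
  obtain ⟨a, ha, b, hb, he⟩ := h; exact ⟨b, hb, a, ha, he.symm⟩

lemma bourne_trans {I : Set T} (hadd : ∀ {a b : T}, a ∈ I → b ∈ I → a + b ∈ I)
    {x y z : T} (h1 : Bourne I x y) (h2 : Bourne I y z) : Bourne I x z := by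
  obtain ⟨a, ha, b, hb, he⟩ := h1
  obtain ⟨c, hc, d, hd, he'⟩ := h2
  refine ⟨a + c, hadd ha hc, d + b, hadd hd hb, ?_⟩
  calc x + (a + c) = (x + a) + c := by rw [add_assoc]
    _ = (y + c) + b := by rw [he, add_right_comm]
    _ = (z + d) + b := by rw [he']
    _ = z + (d + b) := by rw [add_assoc]

lemma bourne_add {I : Set T} {x x' y y' : T}
    (hadd : ∀ {a b : T}, a ∈ I → b ∈ I → a + b ∈ I)
    (h1 : Bourne I x x') (h2 : Bourne I y y') : Bourne I (x + y) (x' + y') := by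
  obtain ⟨a, ha, b, hb, he⟩ := h1
  obtain ⟨c, hc, d, hd, he'⟩ := h2
  refine ⟨a + c, hadd ha hc, b + d, hadd hb hd, ?_⟩
  calc x + y + (a + c) = (x + a) + (y + c) := by abel
    _ = (x' + b) + (y' + d) := by rw [he, he']
    _ = x' + y' + (b + d) := by abel

lemma bourne_mk_eq {I : Set T} (h0 : (0:T) ∈ I)
    (hadd : ∀ {a b : T}, a ∈ I → b ∈ I → a + b ∈ I)
    {x y : T} (h : Quot.mk (Bourne I) x = Quot.mk (Bourne I) y) : Bourne I x y := by
  have e : Equivalence (Bourne I) :=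
    ⟨bourne_refl h0, bourne_symm, fun a b => bourne_trans hadd a b⟩
  exact e.eqvGen_iff.mp (Quot.eq.mp h)

lemma bourne_mul_slot {S : NaryGammaSemiring n T Γ} {I : Set T}
    (hI : IsGammaIdeal S I) (z : Fin n → T) (j : Fin n) {a b : T}
    (h : Bourne I a b) (γ : Fin (n-1) → Γ) :
    Bourne I (S.mul (Function.update z j a) γ) (S.mul (Function.update z j b) γ) := by
  obtain ⟨u, hu, v, hv, he⟩ := h
  refine ⟨S.mul (Function.update z j u) γ, hI.insert_mem z j u hu γ,
          S.mul (Function.update z j v) γ, hI.insert_mem z j v hv γ, ?_⟩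
  rw [← S.add_slot, ← S.add_slot, he]

lemma bourne_mul_all {S : NaryGammaSemiring n T Γ} {I : Set T}
    (hI : IsGammaIdeal S I) (x x' : Fin n → T)
    (h : ∀ j, Bourne I (x j) (x' j)) (γ : Fin (n-1) → Γ) :
    Bourne I (S.mul x γ) (S.mul x' γ) := by
  classical
  have key : ∀ k : ℕ,
      Bourne I (S.mul x γ) (S.mul (fun j => if j.val < k then x' j else x j) γ) := by
    intro k
    induction k with
    | zero =>
      simpa using bourne_refl hI.zero_mem (S.mul x γ)
    | succ k ih =>
      by_cases hk : k < n
      · set z : Fin n → T := fun j => if j.val < k then x' j else x j with hz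
        have hprev : z = Function.update z ⟨k, hk⟩ (x ⟨k, hk⟩) := by
          funext i
          rcases eq_or_ne i ⟨k, hk⟩ with rfl | hne
          · simp [hz]
          · simp [Function.update_of_ne hne]
        have hstep : (fun j : Fin n => if j.val < k + 1 then x' j else x j)
            = Function.update z ⟨k, hk⟩ (x' ⟨k, hk⟩) := by
          funext i
          rcases eq_or_ne i ⟨k, hk⟩ with rfl | hne
          · simp
          · have hik : i.val ≠ k := fun hc => hne (Fin.ext hc)
            have : i.val < k + 1 ↔ i.val < k := by omega
            simp [Function.update_of_ne hne, hz, this]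
        rw [hstep]
        refine bourne_trans (fun a b => hI.add_mem a b) ih ?_
        conv_lhs => rw [hprev]
        exact bourne_mul_slot hI z ⟨k, hk⟩ (h ⟨k, hk⟩) γ
      · have heq : (fun j : Fin n => if j.val < k + 1 then x' j else x j)
            = fun j : Fin n => if j.val < k then x' j else x j := by
          funext i
          have h1 : i.val < k := by omega
          have h2 : i.val < k + 1 := by omega
          simp [h1, h2]
        rw [heq]; exact ih
  have := key n
  simpa [fun j : Fin n => j.isLt] using this

end Helpers

/-- on the quotient `T/≡_I` of `T` by the Bourne relation modulo a
`Γ`-ideal `I`, addition and the `n`-ary multiplication descend to well-defined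
operations (i.e. the canonical projection is additive and multiplicative), the
quotient is again a commutative additive monoid with zero the class of `0`, and
the induced multiplication again satisfies axioms (A1), (A2) and (A4). -/
theorem quotient_nary_gamma_semiring {n : ℕ} {T Γ : Type*}
    [AddCommMonoid T] [AddCommSemigroup Γ]
    (hn : 2 ≤ n) (S : NaryGammaSemiring n T Γ) (I : Set T) (hI : IsGammaIdeal S I) :
    ∃ (addQ : Quot (Bourne I) → Quot (Bourne I) → Quot (Bourne I))
      (mulQ : (Fin n → Quot (Bourne I)) → (Fin (n - 1) → Γ) → Quot (Bourne I)),
      -- the canonical projection is additive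
      (∀ x y : T, addQ (Quot.mk _ x) (Quot.mk _ y) = Quot.mk _ (x + y)) ∧
      -- the induced multiplication is well defined, i.e. the projection is multiplicative
      (∀ (x : Fin n → T) (γ : Fin (n - 1) → Γ),
        mulQ (fun j => Quot.mk _ (x j)) γ = Quot.mk _ (S.mul x γ)) ∧
      -- `T/≡_I` is a commutative additive monoid with zero the class of `0`
      (∀ q, addQ (Quot.mk _ (0 : T)) q = q) ∧
      (∀ q, addQ q (Quot.mk _ (0 : T)) = q) ∧
      (∀ p q, addQ p q = addQ q p) ∧
      (∀ p q r, addQ (addQ p q) r = addQ p (addQ q r)) ∧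
      -- (A1) additivity in each `T`-slot
      (∀ (x : Fin n → Quot (Bourne I)) (j : Fin n) (a b : Quot (Bourne I))
          (γ : Fin (n - 1) → Γ),
        mulQ (Function.update x j (addQ a b)) γ
          = addQ (mulQ (Function.update x j a) γ) (mulQ (Function.update x j b) γ)) ∧
      -- (A2) additivity in each `Γ`-slot
      (∀ (x : Fin n → Quot (Bourne I)) (k : Fin (n - 1)) (δ δ' : Γ)
          (γ : Fin (n - 1) → Γ),
        mulQ x (Function.update γ k (δ + δ'))
          = addQ (mulQ x (Function.update γ k δ)) (mulQ x (Function.update γ k δ'))) ∧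
      -- (A4) absorption of the zero class
      (∀ (x : Fin n → Quot (Bourne I)) (γ : Fin (n - 1) → Γ) (j : Fin n),
        x j = Quot.mk _ (0 : T) → mulQ x γ = Quot.mk _ (0 : T)) := by
    classical
  have h0 := hI.zero_mem
  have hadd : ∀ {a b : T}, a ∈ I → b ∈ I → a + b ∈ I := fun ha hb => hI.add_mem ha hb
  set R := Bourne I with hR
  have outb : ∀ x : T, Bourne I (Quot.mk R x).out x := fun x =>
    bourne_mk_eq h0 hadd (Quot.out_eq _)
  let addQ : Quot R → Quot R → Quot R := fun p q => Quot.mk R (p.out + q.out)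
  let mulQ : (Fin n → Quot R) → (Fin (n - 1) → Γ) → Quot R :=
    fun x γ => Quot.mk R (S.mul (fun j => (x j).out) γ)
  have haddQ : ∀ x y : T, addQ (Quot.mk R x) (Quot.mk R y) = Quot.mk R (x + y) := by
    intro x y
    exact Quot.sound (bourne_add hadd (outb x) (outb y))
  have hmulQ : ∀ (x : Fin n → T) (γ : Fin (n - 1) → Γ),
      mulQ (fun j => Quot.mk R (x j)) γ = Quot.mk R (S.mul x γ) := by
    intro x γ
    exact Quot.sound (bourne_mul_all hI _ _ (fun j => outb (x j)) γ)
  have upd_comp : ∀ (g : Fin n → T) (j : Fin n) (c : T),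
      Function.update (fun i => Quot.mk R (g i)) j (Quot.mk R c)
        = fun i => Quot.mk R (Function.update g j c i) := by
    intro g j c
    funext i
    rcases eq_or_ne i j with rfl | hne
    · simp
    · simp [Function.update_of_ne hne]
  refine ⟨addQ, mulQ, haddQ, hmulQ, ?_, ?_, ?_, ?_, ?_, ?_, ?_⟩
  · intro q
    rw [← Quot.out_eq q, haddQ, zero_add]
  · intro q
    rw [← Quot.out_eq q, haddQ, add_zero]
  · intro p q
    show Quot.mk R (p.out + q.out) = Quot.mk R (q.out + p.out)
    rw [add_comm]
  · intro p q r
    obtain ⟨a, rfl⟩ : ∃ a, Quot.mk R a = p := ⟨p.out, Quot.out_eq p⟩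
    obtain ⟨b, rfl⟩ : ∃ b, Quot.mk R b = q := ⟨q.out, Quot.out_eq q⟩
    obtain ⟨c, rfl⟩ : ∃ c, Quot.mk R c = r := ⟨r.out, Quot.out_eq r⟩
    rw [haddQ a b, haddQ b c, haddQ (a + b) c, haddQ a (b + c), add_assoc]
  · intro x j a b γ
    have hx : x = fun i => Quot.mk R ((x i).out) := funext fun i => (Quot.out_eq _).symm
    rw [hx, ← Quot.out_eq a, ← Quot.out_eq b, haddQ,
      upd_comp (fun i => (x i).out) j (a.out + b.out),
      upd_comp (fun i => (x i).out) j a.out,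
      upd_comp (fun i => (x i).out) j b.out,
      hmulQ, hmulQ, hmulQ, S.add_slot, ← haddQ]
  · intro x k δ δ' γ
    have hx : x = fun i => Quot.mk R ((x i).out) := funext fun i => (Quot.out_eq _).symm
    rw [hx, hmulQ, hmulQ, hmulQ, S.add_gamma, ← haddQ]
  · intro x γ j hj
    have hx : x = fun i => Quot.mk R ((x i).out) := funext fun i => (Quot.out_eq _).symm
    rw [hx, hmulQ]
    have hB : Bourne I ((x j).out) 0 := by
      refine bourne_mk_eq h0 hadd ?_
      rw [Quot.out_eq]
      exact hj
    have h1 := bourne_mul_slot hI (fun i => (x i).out) j hB γ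
    rw [Function.update_eq_self] at h1
    rw [S.zero_slot (Function.update (fun i => (x i).out) j 0) γ j
      (Function.update_self j 0 _)] at h1
    exact Quot.sound h1
end
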